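/- arXiv:1807.05177 — 3 statements merged into one kernel-verified Lean document; each statement's English description precedes it below -/
import Mathlib

section
/- Energy dissipation identity: let T > 0 and let (x_i, v_i), i = 1, …, n, be a smooth solution of the controlled Cucker-Smale system on [0, T]. Define the kinetic energy E₁(v) := (1/2)∑_{i=1}^n |v_i|², the potential energy E₂(x) := (M/2)∑_{i=2}^n ∫₀^{|x_{i−1} − x_i − z_{i−1}|²} φ(r) dr, and the dissipation D(x, v) := (K/(2n))∑_{i,j=1}^n ψ(r_{ij})|v_i − v_j|². Then for all 0 ≤ t ≤ T, (d/dt)E₁(v(t)) + (d/dt)E₂(x(t)) + D(x(t), v(t)) = 0. -/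
open scoped BigOperators
open Filter MeasureTheory

noncomputable section

/-- Singular communication weight ψ(r) = r^{-α}. -/
def psiCS (α r : ℝ) : ℝ := r ^ (-α)

/-- Regular communication weight φ(r) = (1+r)^{-β}. -/
def phiCS (β r : ℝ) : ℝ := (1 + r) ^ (-β)

/-- The decentralized control u_i (agents indexed 1,…,n): for 2 ≤ i ≤ n-1,
`u_i = φ(|x_{i-1}-x_i-z_{i-1}|²)(x_{i-1}-x_i-z_{i-1}) - φ(|x_i-x_{i+1}-z_i|²)(x_i-x_{i+1}-z_i)`,
with only the second term for i = 1 and only the first term for i = n. -/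
def uCS {E : Type*} [NormedAddCommGroup E] [NormedSpace ℝ E]
    (n : ℕ) (φ : ℝ → ℝ) (z x : ℕ → E) (i : ℕ) : E :=
  (if 2 ≤ i then φ (‖x (i-1) - x i - z (i-1)‖ ^ 2) • (x (i-1) - x i - z (i-1)) else 0)
    - (if i + 1 ≤ n then φ (‖x i - x (i+1) - z i‖ ^ 2) • (x i - x (i+1) - z i) else 0)

/-- (x, v) is a solution of the controlled Cucker–Smale system
`x_i' = v_i`, `v_i' = (K/n) ∑_{j≠i} ψ(r_{ij})(v_j - v_i) + M u_i` on the time set S. -/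
def IsCSSol {E : Type*} [NormedAddCommGroup E] [NormedSpace ℝ E]
    (n : ℕ) (K M α β : ℝ) (z : ℕ → E) (x v : ℕ → ℝ → E) (S : Set ℝ) : Prop :=
  ∀ i ∈ Finset.Icc 1 n, ∀ t ∈ S,
    HasDerivWithinAt (x i) (v i t) S t ∧
    HasDerivWithinAt (v i)
      ((K / n) • ∑ j ∈ (Finset.Icc 1 n).erase i,
          psiCS α ‖x j t - x i t‖ • (v j t - v i t)
        + M • uCS n (phiCS β) z (fun k => x k t) i) S t

/-- Potential energy E₂(x) = (M/2) ∑_{i=2}^n ∫₀^{|x_{i-1}-x_i-z_{i-1}|²} φ(r) dr. -/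
def E2CS {E : Type*} [NormedAddCommGroup E] [NormedSpace ℝ E]
    (n : ℕ) (M β : ℝ) (z x : ℕ → E) : ℝ :=
  (M / 2) * ∑ i ∈ Finset.Icc 2 n, ∫ r in (0:ℝ)..(‖x (i-1) - x i - z (i-1)‖ ^ 2), phiCS β r

/-- Kinetic energy E₁(v) = (1/2) ∑ᵢ |vᵢ|². -/
def E1CS {E : Type*} [NormedAddCommGroup E] [NormedSpace ℝ E]
    (n : ℕ) (v : ℕ → E) : ℝ :=
  (1 / 2) * ∑ i ∈ Finset.Icc 1 n, ‖v i‖ ^ 2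

/-- Dissipation D(x,v) = (K/(2n)) ∑_{i≠j} ψ(r_{ij}) |v_i - v_j|². -/
def DCS {E : Type*} [NormedAddCommGroup E] [NormedSpace ℝ E]
    (n : ℕ) (K α : ℝ) (x v : ℕ → E) : ℝ :=
  (K / (2 * n)) * ∑ i ∈ Finset.Icc 1 n, ∑ j ∈ (Finset.Icc 1 n).erase i,
    psiCS α ‖x j - x i‖ * ‖v i - v j‖ ^ 2

/-- Velocity fluctuation (1/(4n)) ∑_{i,j} |v_i - v_j|². -/
def VflCS {E : Type*} [NormedAddCommGroup E] [NormedSpace ℝ E]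
    (n : ℕ) (v : ℕ → E) : ℝ :=
  (1 / (4 * n)) * ∑ i ∈ Finset.Icc 1 n, ∑ j ∈ Finset.Icc 1 n, ‖v i - v j‖ ^ 2

open scoped InnerProductSpace

/-! Multiply the velocity equation by `v_i` and sum over `i`. Exchanging `i` and `j` symmetrises
the alignment term into `-D`. Summation by parts turns the control term into
`-M ∑ φ(|y_i|²) ⟪y_i, v_{i-1} - v_i⟫` with `y_i = x_{i-1} - x_i - z_{i-1}`, and this is
`-(d/dt)E₂` by the fundamental theorem of calculus, since `(d/dt)|y_i|² = 2⟪y_i, v_{i-1} - v_i⟫`. -/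

lemma continuousOn_phiCS (β : ℝ) : ContinuousOn (phiCS β) (Set.Ioi (-1)) := fun r hr => by
  have h : 1 + r ≠ 0 := by simp only [Set.mem_Ioi] at hr; linarith
  exact ((continuousAt_const.add continuousAt_id).rpow_const (Or.inl h)).continuousWithinAt

lemma hasDerivAt_integral_phiCS (β : ℝ) {y : ℝ} (hy : -1 < y) :
    HasDerivAt (fun u => ∫ r in (0:ℝ)..u, phiCS β r) (phiCS β y) y := by
  have hsub : Set.uIcc 0 y ⊆ Set.Ioi (-1 : ℝ) :=
    Set.ordConnected_Ioi.uIcc_subset (by norm_num) hy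
  exact intervalIntegral.integral_hasDerivAt_right
    ((continuousOn_phiCS β).mono hsub).intervalIntegrable
    ((continuousOn_phiCS β).stronglyMeasurableAtFilter isOpen_Ioi y hy)
    ((continuousOn_phiCS β).continuousAt (isOpen_Ioi.mem_nhds hy))

variable {E : Type*} [NormedAddCommGroup E] [InnerProductSpace ℝ E]

lemma inner_sub_self_add_inner_sub_self (a b : E) :
    ⟪b - a, a⟫_ℝ + ⟪a - b, b⟫_ℝ = -‖a - b‖ ^ 2 := by
  rw [← real_inner_self_eq_norm_sq, inner_sub_right, ← neg_sub a b, inner_neg_left]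
  ring

lemma sum_sum_erase_mul_inner_sub_self {ι : Type*} [DecidableEq ι] (s : Finset ι)
    (w : ι → ι → ℝ) (hw : ∀ i j, w i j = w j i) (v : ι → E) :
    ∑ i ∈ s, ∑ j ∈ s.erase i, w i j * ⟪v j - v i, v i⟫_ℝ
      = -(∑ i ∈ s, ∑ j ∈ s.erase i, w i j * ‖v i - v j‖ ^ 2) / 2 := by
  have hswap : ∑ i ∈ s, ∑ j ∈ s.erase i, w i j * ⟪v j - v i, v i⟫_ℝ
      = ∑ i ∈ s, ∑ j ∈ s.erase i, w i j * ⟪v i - v j, v j⟫_ℝ := by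
    rw [Finset.sum_comm' (t' := s) (s' := fun j => s.erase j)
      (fun i j => by simp only [Finset.mem_erase]; tauto)]
    simp only [hw]
  have hsum : ∑ i ∈ s, ∑ j ∈ s.erase i, w i j * ⟪v j - v i, v i⟫_ℝ
      + ∑ i ∈ s, ∑ j ∈ s.erase i, w i j * ⟪v i - v j, v j⟫_ℝ
      = -∑ i ∈ s, ∑ j ∈ s.erase i, w i j * ‖v i - v j‖ ^ 2 := by
    simp only [← Finset.sum_add_distrib, ← mul_add, inner_sub_self_add_inner_sub_self,
      mul_neg, Finset.sum_neg_distrib]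
  linarith

lemma sum_Icc_filter_add_one_le {M : Type*} [AddCommMonoid M] (n : ℕ) (f : ℕ → M) :
    ∑ i ∈ Finset.Icc 1 n with i + 1 ≤ n, f i = ∑ i ∈ Finset.Icc 2 n, f (i - 1) :=
  Finset.sum_nbij' (· + 1) (· - 1)
    (fun i hi => by simp only [Finset.mem_filter, Finset.mem_Icc] at hi ⊢; omega)
    (fun i hi => by simp only [Finset.mem_filter, Finset.mem_Icc] at hi ⊢; omega)
    (fun i _ => by simp)
    (fun i hi => by simp only [Finset.mem_Icc] at hi; omega)
    (fun i _ => by simp)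

lemma sum_inner_uCS (n : ℕ) (φ : ℝ → ℝ) (z x v : ℕ → E) :
    ∑ i ∈ Finset.Icc 1 n, ⟪uCS n φ z x i, v i⟫_ℝ
      = -∑ i ∈ Finset.Icc 2 n, φ (‖x (i-1) - x i - z (i-1)‖ ^ 2) *
          ⟪x (i-1) - x i - z (i-1), v (i-1) - v i⟫_ℝ := by
  have hterm : ∀ i, ⟪uCS n φ z x i, v i⟫_ℝ
      = (if 2 ≤ i then φ (‖x (i-1) - x i - z (i-1)‖ ^ 2) * ⟪x (i-1) - x i - z (i-1), v i⟫_ℝ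
          else 0)
        - (if i + 1 ≤ n then φ (‖x i - x (i+1) - z i‖ ^ 2) * ⟪x i - x (i+1) - z i, v i⟫_ℝ
          else 0) := by
    intro i
    rw [uCS, inner_sub_left]
    split_ifs <;> simp only [real_inner_smul_left, inner_zero_left]
  have hfilter : (Finset.Icc 1 n).filter (2 ≤ ·) = Finset.Icc 2 n := by
    ext i; simp only [Finset.mem_filter, Finset.mem_Icc]; omega
  rw [Finset.sum_congr rfl fun i _ => hterm i, Finset.sum_sub_distrib, ← Finset.sum_filter,
    ← Finset.sum_filter, hfilter, sum_Icc_filter_add_one_le, ← Finset.sum_sub_distrib,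
    ← Finset.sum_neg_distrib]
  refine Finset.sum_congr rfl fun i hi => ?_
  have hi : i - 1 + 1 = i := Nat.sub_add_cancel (by simp only [Finset.mem_Icc] at hi; omega)
  rw [hi, inner_sub_right]
  ring

lemma sum_inner_csAcceleration (n : ℕ) (K M α β : ℝ) (z x v : ℕ → E) :
    ∑ i ∈ Finset.Icc 1 n, ⟪v i, (K / n) • ∑ j ∈ (Finset.Icc 1 n).erase i,
        psiCS α ‖x j - x i‖ • (v j - v i) + M • uCS n (phiCS β) z x i⟫_ℝ
      = -DCS n K α x v - M * ∑ i ∈ Finset.Icc 2 n, phiCS β (‖x (i-1) - x i - z (i-1)‖ ^ 2) *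
          ⟪x (i-1) - x i - z (i-1), v (i-1) - v i⟫_ℝ := by
  have halign := sum_sum_erase_mul_inner_sub_self (Finset.Icc 1 n)
    (fun i j => psiCS α ‖x j - x i‖) (fun i j => by rw [norm_sub_rev]) v
  have hcontrol := sum_inner_uCS n (phiCS β) z x v
  simp only [real_inner_comm (v _)] at halign hcontrol
  simp only [inner_add_right, real_inner_smul_right, inner_sum, Finset.sum_add_distrib,
    ← Finset.mul_sum, halign, hcontrol, DCS]
  ring

section Derivatives

variable {S : Set ℝ} {t : ℝ}

lemma hasDerivWithinAt_E1CS {n : ℕ} {v : ℕ → ℝ → E} {a : ℕ → E}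
    (h : ∀ i ∈ Finset.Icc 1 n, HasDerivWithinAt (v i) (a i) S t) :
    HasDerivWithinAt (fun s => E1CS n fun i => v i s)
      (∑ i ∈ Finset.Icc 1 n, ⟪v i t, a i⟫_ℝ) S t := by
  refine ((HasDerivWithinAt.fun_sum fun i hi => (h i hi).norm_sq).const_mul
    (1 / 2 : ℝ)).congr_deriv ?_
  rw [Finset.mul_sum]
  simp only [← mul_assoc]
  norm_num

lemma hasDerivWithinAt_E2CS {n : ℕ} {M β : ℝ} {z : ℕ → E} {x : ℕ → ℝ → E} {w : ℕ → E}
    (h : ∀ i ∈ Finset.Icc 1 n, HasDerivWithinAt (x i) (w i) S t) :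
    HasDerivWithinAt (fun s => E2CS n M β z fun i => x i s)
      (M * ∑ i ∈ Finset.Icc 2 n, phiCS β (‖x (i-1) t - x i t - z (i-1)‖ ^ 2) *
        ⟪x (i-1) t - x i t - z (i-1), w (i-1) - w i⟫_ℝ) S t := by
  have hterm : ∀ i ∈ Finset.Icc 2 n, HasDerivWithinAt
      (fun s => ∫ r in (0:ℝ)..(‖x (i-1) s - x i s - z (i-1)‖ ^ 2), phiCS β r)
      (phiCS β (‖x (i-1) t - x i t - z (i-1)‖ ^ 2) *
        (2 * ⟪x (i-1) t - x i t - z (i-1), w (i-1) - w i⟫_ℝ)) S t := by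
    intro i hi
    have hi' : i - 1 ∈ Finset.Icc 1 n ∧ i ∈ Finset.Icc 1 n := by
      simp only [Finset.mem_Icc] at hi ⊢; omega
    have hgap := (((h _ hi'.1).fun_sub (h _ hi'.2)).sub_const (z (i-1))).norm_sq
    exact (hasDerivAt_integral_phiCS β
      (neg_one_lt_zero.trans_le (sq_nonneg ‖x (i-1) t - x i t - z (i-1)‖))).comp_hasDerivWithinAt
      t hgap
  refine ((HasDerivWithinAt.fun_sum hterm).const_mul (M / 2)).congr_deriv ?_
  rw [Finset.mul_sum, Finset.mul_sum]
  refine Finset.sum_congr rfl fun i _ => ?_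
  ring

end Derivatives

theorem cs_energy_dissipation_general
    {d n : ℕ} (K M α β : ℝ)
    (z : ℕ → EuclideanSpace ℝ (Fin d)) (x v : ℕ → ℝ → EuclideanSpace ℝ (Fin d))
    (T : ℝ)
    (hsol : IsCSSol n K M α β z x v (Set.Icc 0 T)) :
    ∀ t ∈ Set.Icc (0:ℝ) T, ∃ e₁ e₂ : ℝ,
      HasDerivWithinAt (fun s => E1CS n (fun i => v i s)) e₁ (Set.Icc 0 T) t ∧
      HasDerivWithinAt (fun s => E2CS n M β z (fun i => x i s)) e₂ (Set.Icc 0 T) t ∧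
      e₁ + e₂ + DCS n K α (fun i => x i t) (fun i => v i t) = 0 := by
  intro t ht
  refine ⟨_, _, hasDerivWithinAt_E1CS fun i hi => (hsol i hi t ht).2,
    hasDerivWithinAt_E2CS fun i hi => (hsol i hi t ht).1, ?_⟩
  rw [sum_inner_csAcceleration]
  ring

/-- energy dissipation identity
`(d/dt)E₁(v(t)) + (d/dt)E₂(x(t)) + D(x(t),v(t)) = 0`. -/
theorem cs_energy_dissipation
    {d n : ℕ} (hn : 2 ≤ n) (K M α β : ℝ) (hK : 0 ≤ K) (hM : 0 ≤ M)
    (hα : 0 < α) (hβ : 0 < β)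
    (z : ℕ → EuclideanSpace ℝ (Fin d)) (x v : ℕ → ℝ → EuclideanSpace ℝ (Fin d))
    (T : ℝ) (hT : 0 < T)
    (hsol : IsCSSol n K M α β z x v (Set.Icc 0 T)) :
    ∀ t ∈ Set.Icc (0:ℝ) T, ∃ e₁ e₂ : ℝ,
      HasDerivWithinAt (fun s => E1CS n (fun i => v i s)) e₁ (Set.Icc 0 T) t ∧
      HasDerivWithinAt (fun s => E2CS n M β z (fun i => x i s)) e₂ (Set.Icc 0 T) t ∧
      e₁ + e₂ + DCS n K α (fun i => x i t) (fun i => v i t) = 0 :=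
  cs_energy_dissipation_general K M α β z x v T hsol
end
end

section
/- Sharpened Young-type inequality (Lemma 6.1): let a_1, …, a_{n−1} be vectors in ℝ^d. Then there exists a sufficiently small δ ∈ (0, 1) (independent of the vectors, depending only on n) such that −∑_{i=1}^{n−1} |a_i|² + ∑_{i=1}^{n−2} ⟨a_i, a_{i+1}⟩ ≤ −δⁿ ∑_{i=1}^{n−1} |a_i|². -/
open scoped BigOperators RealInnerProductSpace

/-!
Extend `a` by zero at the indices `0` and `n`. The left-hand side is then
`-½ ∑_{i<n} ‖a i - a (i+1)‖²`, while each `‖a k‖` is at most the sum of the first `k` increments,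
so Cauchy–Schwarz gives `∑ ‖a i‖² ≤ n² ∑ ‖a i - a (i+1)‖²`. Hence `δ = 1/4` works, as `2n² ≤ 4ⁿ`.
-/

open Finset

section DiscretePoincare

variable {E : Type*}

theorem norm_le_sum_range_norm_sub [SeminormedAddCommGroup E] {f : ℕ → E} (h₀ : f 0 = 0)
    (k : ℕ) : ‖f k‖ ≤ ∑ i ∈ range k, ‖f i - f (i + 1)‖ := by
  simpa [dist_eq_norm, h₀] using dist_le_range_sum_dist f k

theorem norm_sq_le_mul_sum_range_norm_sub_sq [SeminormedAddCommGroup E] {f : ℕ → E}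
    (h₀ : f 0 = 0) (k : ℕ) : ‖f k‖ ^ 2 ≤ k * ∑ i ∈ range k, ‖f i - f (i + 1)‖ ^ 2 := by
  calc ‖f k‖ ^ 2 ≤ (∑ i ∈ range k, ‖f i - f (i + 1)‖) ^ 2 := by
        gcongr; exact norm_le_sum_range_norm_sub h₀ k
    _ ≤ k * ∑ i ∈ range k, ‖f i - f (i + 1)‖ ^ 2 := by
        simpa using sq_sum_le_card_mul_sum_sq (s := range k) (f := fun i => ‖f i - f (i + 1)‖)

/-- The discrete Poincaré inequality. -/
theorem sum_range_norm_sq_le_sq_mul_sum_norm_sub_sq [SeminormedAddCommGroup E] {f : ℕ → E}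
    (h₀ : f 0 = 0) (N : ℕ) :
    ∑ i ∈ range N, ‖f i‖ ^ 2 ≤ N ^ 2 * ∑ i ∈ range N, ‖f i - f (i + 1)‖ ^ 2 := by
  set D := ∑ i ∈ range N, ‖f i - f (i + 1)‖ ^ 2
  have hD : ∀ k ∈ range N, ‖f k‖ ^ 2 ≤ N * D := fun k hk => by
    have hkN : k ≤ N := (mem_range.mp hk).le
    calc ‖f k‖ ^ 2 ≤ k * ∑ i ∈ range k, ‖f i - f (i + 1)‖ ^ 2 :=
          norm_sq_le_mul_sum_range_norm_sub_sq h₀ k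
      _ ≤ N * D := by
          gcongr
          exact sum_le_sum_of_subset_of_nonneg (range_mono hkN) fun _ _ _ => by positivity
  calc ∑ i ∈ range N, ‖f i‖ ^ 2 ≤ ∑ _i ∈ range N, N * D := sum_le_sum hD
    _ = N ^ 2 * D := by simp; ring

theorem sum_range_norm_sub_sq_eq [SeminormedAddCommGroup E] [InnerProductSpace ℝ E]
    {f : ℕ → E} {N : ℕ} (h₀ : f 0 = 0) (hN : f N = 0) :
    ∑ i ∈ range N, ‖f i - f (i + 1)‖ ^ 2
      = 2 * (∑ i ∈ range N, ‖f i‖ ^ 2 - ∑ i ∈ range N, ⟪f i, f (i + 1)⟫) := by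
  have hshift : ∑ i ∈ range N, ‖f (i + 1)‖ ^ 2 = ∑ i ∈ range N, ‖f i‖ ^ 2 := by
    have := sum_range_succ' (fun i => ‖f i‖ ^ 2) N
    rw [sum_range_succ] at this
    simp only [h₀, hN, norm_zero] at this
    linarith
  simp only [norm_sub_sq_real, sum_add_distrib, sum_sub_distrib, ← mul_sum, hshift]
  ring

theorem two_mul_le_two_pow (n : ℕ) : 2 * n ≤ 2 ^ n := by
  induction n with
  | zero => simp
  | succ k ih =>
    have := Nat.one_le_two_pow (n := k)
    rw [pow_succ]
    omega

theorem two_mul_sq_le_four_pow (n : ℕ) : 2 * (n : ℝ) ^ 2 ≤ 4 ^ n := by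
  have h : (2 * n : ℝ) ≤ 2 ^ n := by exact_mod_cast two_mul_le_two_pow n
  calc 2 * (n : ℝ) ^ 2 ≤ (2 * n) ^ 2 := by nlinarith
    _ ≤ (2 ^ n) ^ 2 := by gcongr
    _ = 4 ^ n := by rw [← pow_mul, mul_comm, pow_mul]; norm_num

theorem four_pow_inv_mul_sum_norm_sq_le [SeminormedAddCommGroup E] [InnerProductSpace ℝ E]
    {f : ℕ → E} {N : ℕ} (h₀ : f 0 = 0) (hN : f N = 0) :
    (4 ^ N)⁻¹ * ∑ i ∈ range N, ‖f i‖ ^ 2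
      ≤ ∑ i ∈ range N, ‖f i‖ ^ 2 - ∑ i ∈ range N, ⟪f i, f (i + 1)⟫ := by
  set S := ∑ i ∈ range N, ‖f i‖ ^ 2
  set Q := S - ∑ i ∈ range N, ⟪f i, f (i + 1)⟫
  have hQ : 0 ≤ Q := by
    have := sum_range_norm_sub_sq_eq h₀ hN
    have : 0 ≤ ∑ i ∈ range N, ‖f i - f (i + 1)‖ ^ 2 := sum_nonneg fun _ _ => by positivity
    linarith
  have hSQ : S ≤ 2 * (N : ℝ) ^ 2 * Q := by
    have := sum_range_norm_sq_le_sq_mul_sum_norm_sub_sq h₀ N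
    rw [sum_range_norm_sub_sq_eq h₀ hN] at this
    linarith
  have h4 : (0 : ℝ) < 4 ^ N := by positivity
  rw [inv_mul_le_iff₀ h4]
  calc S ≤ 2 * (N : ℝ) ^ 2 * Q := hSQ
    _ ≤ 4 ^ N * Q := by gcongr; exact two_mul_sq_le_four_pow N

end DiscretePoincare

section ExtensionByZero

variable {E : Type*} [SeminormedAddCommGroup E]

noncomputable def extendByZero (n : ℕ) (a : ℕ → E) (i : ℕ) : E :=
  if i ∈ Icc 1 (n - 1) then a i else 0

theorem sum_range_norm_sq_extendByZero (n : ℕ) (a : ℕ → E) :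
    ∑ i ∈ range n, ‖extendByZero n a i‖ ^ 2 = ∑ i ∈ Icc 1 (n - 1), ‖a i‖ ^ 2 := by
  have hsub : Icc 1 (n - 1) ⊆ range n := fun i hi => by
    simp only [mem_Icc, mem_range] at hi ⊢; omega
  simp only [extendByZero, apply_ite (fun x : E => ‖x‖ ^ 2), norm_zero, ne_eq,
    OfNat.ofNat_ne_zero, not_false_eq_true, zero_pow]
  rw [sum_ite_mem, inter_eq_right.mpr hsub]

theorem sum_range_inner_extendByZero [InnerProductSpace ℝ E] (n : ℕ) (a : ℕ → E) :
    ∑ i ∈ range n, ⟪extendByZero n a i, extendByZero n a (i + 1)⟫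
      = ∑ i ∈ Icc 1 (n - 2), ⟪a i, a (i + 1)⟫ := by
  have hsub : Icc 1 (n - 2) ⊆ range n := fun i hi => by
    simp only [mem_Icc, mem_range] at hi ⊢; omega
  have hterm : ∀ i, ⟪extendByZero n a i, extendByZero n a (i + 1)⟫
      = if i ∈ Icc 1 (n - 2) then ⟪a i, a (i + 1)⟫ else 0 := fun i => by
    simp only [extendByZero, mem_Icc]
    split_ifs <;> first | omega | rfl | simp
  simp only [hterm]
  rw [sum_ite_mem, inter_eq_right.mpr hsub]

end ExtensionByZero

theorem sharpened_young_general (n d : ℕ) :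
    ∃ δ ∈ Set.Ioo (0:ℝ) 1,
      ∀ a : ℕ → EuclideanSpace ℝ (Fin d),
        (-∑ i ∈ Finset.Icc 1 (n-1), ‖a i‖ ^ 2)
            + (∑ i ∈ Finset.Icc 1 (n-2), ⟪a i, a (i+1)⟫)
          ≤ -δ ^ n * ∑ i ∈ Finset.Icc 1 (n-1), ‖a i‖ ^ 2 := by
  refine ⟨4⁻¹, by norm_num, fun a => ?_⟩
  have h := four_pow_inv_mul_sum_norm_sq_le (f := extendByZero n a) (N := n)
    (if_neg (by simp)) (if_neg (by simp; omega))
  rw [sum_range_norm_sq_extendByZero, sum_range_inner_extendByZero, ← inv_pow] at h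
  linarith

/-- Lemma 6.1: a sharpened Young-type inequality: there is a sufficiently
small δ ∈ (0,1), depending only on n, such that for all vectors a_1, …, a_{n-1} in ℝ^d,
`-∑_{i=1}^{n-1} |a_i|² + ∑_{i=1}^{n-2} ⟨a_i, a_{i+1}⟩ ≤ -δ^n ∑_{i=1}^{n-1} |a_i|²`. -/
theorem sharpened_young (n d : ℕ) (hn : 2 ≤ n) :
    ∃ δ ∈ Set.Ioo (0:ℝ) 1,
      ∀ a : ℕ → EuclideanSpace ℝ (Fin d),
        (-∑ i ∈ Finset.Icc 1 (n-1), ‖a i‖ ^ 2)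
            + (∑ i ∈ Finset.Icc 1 (n-2), ⟪a i, a (i+1)⟫)
          ≤ -δ ^ n * ∑ i ∈ Finset.Icc 1 (n-1), ‖a i‖ ^ 2 :=
  sharpened_young_general n d
end

section
/- Concavity-type inequality for the antiderivative of φ (key step in the proof of Corollary 6.4): let β ∈ (0, 1) and define Φ(s) := ((1+s)^{1−β} − 1)/(1−β) for s ≥ 0. Then for every c ∈ (0, 1) and every s ≥ 0, Φ(c^{1/(1−β)} · s) ≤ c · Φ(s). -/
open Real Set

theorem ConcaveOn.map_add_sub_map_le_of_le {S : Set ℝ} {f : ℝ → ℝ} (hf : ConcaveOn ℝ S f)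
    {x y d : ℝ} (hx : x ∈ S) (hyd : y + d ∈ S) (hxy : x ≤ y) (hd : 0 ≤ d) :
    f (y + d) - f y ≤ f (x + d) - f x := by
  rcases (add_nonneg (sub_nonneg.2 hxy) hd).eq_or_lt with hL | hL
  · obtain rfl : d = 0 := by linarith
    obtain rfl : y = x := by linarith
    simp
  -- `y` and `x + d` are the convex combinations of `x` and `y + d` with swapped weights.
  have hab : d / (y - x + d) + (y - x) / (y - x + d) = 1 := by field_simp; ring
  have hy := hf.2 hx hyd (div_nonneg hd hL.le) (div_nonneg (sub_nonneg.2 hxy) hL.le) hab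
  have hxd := hf.2 hx hyd (div_nonneg (sub_nonneg.2 hxy) hL.le) (div_nonneg hd hL.le)
    ((add_comm _ _).trans hab)
  simp only [smul_eq_mul] at hy hxd
  rw [show d / (y - x + d) * x + (y - x) / (y - x + d) * (y + d) = y by field_simp; ring] at hy
  rw [show (y - x) / (y - x + d) * x + d / (y - x + d) * (y + d) = x + d by field_simp; ring]
    at hxd
  linear_combination hy + hxd - (f x + f (y + d)) * hab

theorem one_add_mul_rpow_sub_one_le {p a s : ℝ} (hp₀ : 0 ≤ p) (hp₁ : p ≤ 1) (ha₀ : 0 < a)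
    (ha₁ : a ≤ 1) (hs : 0 ≤ s) :
    (1 + a * s) ^ p - 1 ≤ a ^ p * ((1 + s) ^ p - 1) := by
  -- Factor out `a`: `1 + a s = a (a⁻¹ + s)`, and compare the increments of `t ↦ t ^ p` over
  -- `[1, 1 + s]` and `[a⁻¹, a⁻¹ + s]`.
  have hinc := (concaveOn_rpow hp₀ hp₁).map_add_sub_map_le_of_le (x := 1) (y := a⁻¹) (d := s)
    (mem_Ici.2 zero_le_one) (mem_Ici.2 (by positivity)) (one_le_inv_iff₀.2 ⟨ha₀, ha₁⟩) hs
  have hfactor : (1 + a * s) ^ p = a ^ p * (a⁻¹ + s) ^ p := by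
    rw [← mul_rpow ha₀.le (by positivity), mul_add, mul_inv_cancel₀ ha₀.ne']
  have hinv : a ^ p * a⁻¹ ^ p = 1 := by
    rw [inv_rpow ha₀.le, mul_inv_cancel₀ (rpow_pos_of_pos ha₀ p).ne']
  simp only [one_rpow] at hinc
  calc (1 + a * s) ^ p - 1 = a ^ p * ((a⁻¹ + s) ^ p - a⁻¹ ^ p) := by rw [hfactor, mul_sub, hinv]
    _ ≤ a ^ p * ((1 + s) ^ p - 1) := by gcongr

/-- concavity-type inequality for the antiderivative
`Φ(s) = ((1+s)^{1-β} - 1)/(1-β)` of `φ(r) = (1+r)^{-β}` with β ∈ (0,1):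
for every c ∈ (0,1) and s ≥ 0, `Φ(c^{1/(1-β)} s) ≤ c Φ(s)`. -/
theorem Phi_rpow_scaling_le (β c s : ℝ)
    (hβ0 : 0 < β) (hβ1 : β < 1) (hc : c ∈ Set.Ioo (0:ℝ) 1) (hs : 0 ≤ s) :
    ((1 + c ^ ((1:ℝ) / (1 - β)) * s) ^ (1 - β) - 1) / (1 - β)
      ≤ c * (((1 + s) ^ (1 - β) - 1) / (1 - β)) := by
  obtain ⟨hc₀, hc₁⟩ := hc
  have hγ : 0 < 1 - β := by linarith
  have hpow : (c ^ ((1:ℝ) / (1 - β))) ^ (1 - β) = c := by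
    rw [one_div, rpow_inv_rpow hc₀.le hγ.ne']
  rw [mul_div_assoc', div_le_div_iff_of_pos_right hγ]
  calc (1 + c ^ ((1:ℝ) / (1 - β)) * s) ^ (1 - β) - 1
      ≤ (c ^ ((1:ℝ) / (1 - β))) ^ (1 - β) * ((1 + s) ^ (1 - β) - 1) :=
        one_add_mul_rpow_sub_one_le hγ.le (by linarith) (rpow_pos_of_pos hc₀ _)
          (rpow_le_one hc₀.le hc₁.le (by positivity)) hs
    _ = c * ((1 + s) ^ (1 - β) - 1) := by rw [hpow]
end
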